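/- There exists an independent set of size 367 in the fifth strong product power of the 7-cycle C₇; hence α(C₇⁵) ≥ 367 and Θ(C₇) ≥ 367^{1/5}. -/

import Mathlib

/-- Circular distance between two elements of `ZMod n`. -/
def cyclicDist (n : ℕ) (a b : ZMod n) : ℕ := min (a - b).val (b - a).val

/-- The circular graph `C_{k,n}` on `ZMod n`: distinct vertices are adjacent
iff their circular distance is strictly less than `k`. -/
def circularGraph (k n : ℕ) : SimpleGraph (ZMod n) where
  Adj u v := u ≠ v ∧ cyclicDist n u v < k
  symm := by
    constructor
    rintro u v ⟨h1, h2⟩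
    exact ⟨h1.symm, by simpa [cyclicDist, min_comm] using h2⟩
  loopless := by constructor; rintro u ⟨h, _⟩; exact h rfl

/-- The `d`-th strong product power of a graph. -/
def strongPower {V : Type*} (G : SimpleGraph V) (d : ℕ) : SimpleGraph (Fin d → V) where
  Adj x y := x ≠ y ∧ ∀ i, x i = y i ∨ G.Adj (x i) (y i)
  symm := by
    constructor
    rintro x y ⟨h1, h2⟩
    exact ⟨h1.symm, fun i => (h2 i).imp Eq.symm (fun h => G.adj_symm h)⟩
  loopless := by constructor; rintro x ⟨h, _⟩; exact h rfl

/-- A set of vertices is independent if no two of its elements are adjacent. -/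
def IsIndep {V : Type*} (G : SimpleGraph V) (s : Set V) : Prop :=
  ∀ u ∈ s, ∀ v ∈ s, u ≠ v → ¬ G.Adj u v

/-- The independence number of a graph on a finite vertex set. -/
noncomputable def alpha {V : Type*} [Fintype V] (G : SimpleGraph V) : ℕ :=
  sSup {m | ∃ s : Finset V, IsIndep G ↑s ∧ s.card = m}

/-- The Shannon capacity of a graph. -/
noncomputable def shannonCapacity {V : Type*} [Fintype V] (G : SimpleGraph V) : ℝ :=
  ⨆ d : ℕ+, (alpha (strongPower G d) : ℝ) ^ ((1 : ℝ) / (d : ℝ))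

/-!
The witness is an explicit list of 367 words of `(ℤ/7ℤ)⁵`. In the strong power of `C₇`, two
distinct words are non-adjacent exactly when they are at circular distance at least 2 in some
coordinate, and this is checked for all pairs of the list by kernel computation. The list
then bounds `α(C₇⁵)` from below, and `α(C₇⁵)^{1/5}` is one of the terms whose supremum is
`Θ(C₇)`.
-/

lemma cyclicDist_self (n : ℕ) (a : ZMod n) : cyclicDist n a a = 0 := by
  simp [cyclicDist]

lemma cyclicDist_comm (n : ℕ) (a b : ZMod n) : cyclicDist n a b = cyclicDist n b a :=
  min_comm _ _

lemma circularGraph_eq_or_adj_iff {k n : ℕ} (hk : 0 < k) {a b : ZMod n} :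
    a = b ∨ (circularGraph k n).Adj a b ↔ cyclicDist n a b < k := by
  refine ⟨?_, fun h => or_iff_not_imp_left.2 fun hne => ⟨hne, h⟩⟩
  rintro (rfl | ⟨-, h⟩)
  · rwa [cyclicDist_self]
  · exact h

lemma isIndep_strongPower_iff {V : Type*} {G : SimpleGraph V} {d : ℕ} {s : Set (Fin d → V)} :
    IsIndep (strongPower G d) s ↔
      s.Pairwise fun x y => ∃ i, ¬(x i = y i ∨ G.Adj (x i) (y i)) := by
  simp only [IsIndep, Set.Pairwise, strongPower, not_and, not_forall]
  exact forall₄_congr fun x _ y _ => ⟨fun h hne => h hne hne, fun h hne _ => h hne⟩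

lemma isIndep_strongPower_circularGraph_iff {k n d : ℕ} (hk : 0 < k)
    {s : Set (Fin d → ZMod n)} :
    IsIndep (strongPower (circularGraph k n) d) s ↔
      s.Pairwise fun x y => ∃ i, k ≤ cyclicDist n (x i) (y i) := by
  simp only [isIndep_strongPower_iff, circularGraph_eq_or_adj_iff hk, not_lt]

section IndependenceNumber

variable {V : Type*} [Fintype V]

lemma bddAbove_card_isIndep (G : SimpleGraph V) :
    BddAbove {m | ∃ s : Finset V, IsIndep G ↑s ∧ s.card = m} :=
  ⟨Fintype.card V, by rintro m ⟨s, -, rfl⟩; exact s.card_le_univ⟩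

lemma IsIndep.card_le_alpha {G : SimpleGraph V} {s : Finset V} (h : IsIndep G ↑s) :
    s.card ≤ alpha G :=
  le_csSup (bddAbove_card_isIndep G) ⟨s, h, rfl⟩

lemma alpha_le_card (G : SimpleGraph V) : alpha G ≤ Fintype.card V :=
  csSup_le ⟨0, ∅, by simp [IsIndep], rfl⟩ fun _ ⟨s, _, hs⟩ => hs ▸ s.card_le_univ

lemma alpha_strongPower_rpow_le_card (G : SimpleGraph V) (d : ℕ+) :
    (alpha (strongPower G d) : ℝ) ^ ((1 : ℝ) / (d : ℝ)) ≤ Fintype.card V := by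
  have hα : (alpha (strongPower G d) : ℝ) ≤ (Fintype.card V : ℝ) ^ (d : ℕ) := by
    exact_mod_cast (alpha_le_card _).trans_eq (by simp)
  calc (alpha (strongPower G d) : ℝ) ^ ((1 : ℝ) / (d : ℝ))
      ≤ ((Fintype.card V : ℝ) ^ (d : ℕ)) ^ ((d : ℕ) : ℝ)⁻¹ := by
        rw [one_div]; gcongr
    _ = Fintype.card V := Real.pow_rpow_inv_natCast (by positivity) d.ne_zero

lemma alpha_strongPower_rpow_le_shannonCapacity (G : SimpleGraph V) (d : ℕ+) :
    (alpha (strongPower G d) : ℝ) ^ ((1 : ℝ) / (d : ℝ)) ≤ shannonCapacity G :=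
  le_ciSup ⟨(Fintype.card V : ℝ), by
    rintro _ ⟨e, rfl⟩; exact alpha_strongPower_rpow_le_card G e⟩ d

end IndependenceNumber

section Witness

/-- For `a, b < 7`, the test `a - b ∈ {2, 3, 4, 5}` in `ℤ/7ℤ`; the `+ 7` avoids truncated
subtraction. -/
def digitsFar (a b : ℕ) : Bool :=
  2 ≤ (a + 7 - b) % 7 && (a + 7 - b) % 7 ≤ 5

def codesFar (m n : ℕ) : Bool :=
  (List.range 5).any fun i => digitsFar (m / 7 ^ i % 7) (n / 7 ^ i % 7)

/-- The word whose `i`-th letter is the `i`-th base-7 digit of `n`, least significant first. -/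
def word (n : ℕ) (i : Fin 5) : ZMod 7 :=
  ((n / 7 ^ (i : ℕ) % 7 : ℕ) : ZMod 7)

def witnessCodes : List ℕ :=
  [27, 29, 87, 138, 189, 203, 261, 312, 384, 435, 444, 495, 609, 618, 669, 732, 741, 792, 850,
    901, 915, 966, 1024, 1038, 1089, 1147, 1198, 1256, 1270, 1321, 1323, 1419, 1421, 1479, 1530,
    1555, 1602, 1653, 1711, 1725, 1776, 1827, 1885, 1950, 2008, 2010, 2073, 2131, 2182, 2184,
    2242, 2256, 2307, 2365, 2405, 2463, 2514, 2572, 2623, 2637, 2688, 2697, 2760, 2811, 2869,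
    2871, 2929, 2943, 2994, 3045, 3108, 3117, 3168, 3226, 3277, 3291, 3349, 3400, 3465, 3523,
    3574, 3583, 3697, 3757, 3795, 3804, 3855, 3978, 4029, 4087, 4152, 4210, 4261, 4263, 4326,
    4384, 4386, 4444, 4507, 4509, 4567, 4618, 4683, 4741, 4792, 4839, 4890, 4948, 4950, 5013,
    5071, 5122, 5124, 5187, 5196, 5247, 5305, 5370, 5428, 5479, 5493, 5544, 5602, 5653, 5711,
    5725, 5776, 5785, 5848, 5899, 5950, 5959, 6010, 6073, 6082, 6133, 6180, 6231, 6289, 6307,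
    6340, 6365, 6405, 6463, 6514, 6535, 6586, 6637, 6646, 6697, 6760, 6762, 6820, 6883, 6943,
    6994, 7052, 7066, 7117, 7168, 7215, 7266, 7324, 7382, 7384, 7447, 7449, 7507, 7570, 7621,
    7623, 7681, 7746, 7804, 7855, 7927, 7978, 8029, 8038, 8101, 8152, 8210, 8212, 8275, 8284,
    8335, 8386, 8458, 8509, 8567, 8664, 8788, 8792, 8839, 8890, 8899, 8962, 8971, 9022, 9073,
    9145, 9196, 9247, 9261, 9319, 9377, 9428, 9493, 9551, 9602, 9648, 9699, 9708, 9759, 9822,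
    9882, 9933, 9947, 10005, 10056, 10114, 10179, 10230, 10288, 10302, 10353, 10411, 10462,
    10471, 10534, 10537, 10658, 10710, 10768, 10819, 10885, 10943, 10989, 11040, 11098, 11126,
    11149, 11214, 11223, 11274, 11337, 11395, 11397, 11455, 11506, 11520, 11571, 11629, 11694,
    11752, 11803, 11812, 11875, 11926, 11977, 11986, 12024, 12075, 12133, 12135, 12193, 12207,
    12258, 12316, 12379, 12381, 12432, 12490, 12541, 12555, 12613, 12664, 12736, 12787, 12789,
    12847, 12910, 12961, 12970, 13021, 13035, 13093, 13144, 13195, 13242, 13267, 13318, 13376,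
    13416, 13474, 13476, 13597, 13648, 13650, 13708, 13722, 13773, 13831, 13882, 13896, 13954,
    14005, 14056, 14070, 14128, 14179, 14237, 14302, 14311, 14362, 14409, 14460, 14511, 14569,
    14634, 14692, 14743, 14757, 14815, 14866, 14917, 14989, 15040, 15049, 15112, 15163, 15221,
    15223, 15274, 15288, 15346, 15397, 15460, 15469, 15520, 15578, 15629, 15694, 15752, 15792,
    15850, 15901, 15910, 15975, 16033, 16084, 16147, 16149, 16207, 16258, 16316, 16330, 16381,
    16439, 16504, 16555, 16564, 16615, 16678, 16736, 16738, 16796]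


theorem witnessCodes_pairwise_codesFar : witnessCodes.Pairwise (codesFar · ·) := by
  decide +kernel

lemma two_le_cyclicDist_of_digitsFar :
    ∀ a < 7, ∀ b < 7, digitsFar a b → 2 ≤ cyclicDist 7 (a : ZMod 7) (b : ZMod 7) := by
  decide

lemma exists_two_le_cyclicDist_word {m n : ℕ} (h : codesFar m n) :
    ∃ i, 2 ≤ cyclicDist 7 (word m i) (word n i) := by
  obtain ⟨i, hi, hfar⟩ := List.any_eq_true.1 h
  have hi : i < 5 := List.mem_range.1 hi
  exact ⟨⟨i, hi⟩, two_le_cyclicDist_of_digitsFar _ (Nat.mod_lt _ (by norm_num)) _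
    (Nat.mod_lt _ (by norm_num)) hfar⟩

def witness : Finset (Fin 5 → ZMod 7) :=
  (witnessCodes.map word).toFinset

lemma witnessCodes_map_word_pairwise :
    (witnessCodes.map word).Pairwise fun x y => ∃ i, 2 ≤ cyclicDist 7 (x i) (y i) :=
  List.pairwise_map.2 <| witnessCodes_pairwise_codesFar.imp exists_two_le_cyclicDist_word

lemma card_witness : witness.card = 367 := by
  rw [witness, List.toFinset_card_of_nodup]
  · rw [List.length_map]; decide +kernel
  · refine witnessCodes_map_word_pairwise.imp fun ⟨i, hi⟩ heq => ?_
    rw [heq, cyclicDist_self] at hi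
    omega

lemma isIndep_witness : IsIndep (strongPower (circularGraph 2 7) 5) ↑witness := by
  have : Std.Symm fun x y : Fin 5 → ZMod 7 => ∃ i, 2 ≤ cyclicDist 7 (x i) (y i) :=
    ⟨fun x y ⟨i, hi⟩ => ⟨i, cyclicDist_comm 7 (x i) (y i) ▸ hi⟩⟩
  rw [isIndep_strongPower_circularGraph_iff two_pos, witness, List.coe_toFinset]
  exact witnessCodes_map_word_pairwise.set_pairwise

end Witness

theorem stmt14 :
    (∃ S : Finset (Fin 5 → ZMod 7),
      S.card = 367 ∧ IsIndep (strongPower (circularGraph 2 7) 5) ↑S) ∧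
    367 ≤ alpha (strongPower (circularGraph 2 7) 5) ∧
    (367 : ℝ) ^ ((1 : ℝ) / 5) ≤ shannonCapacity (circularGraph 2 7) := by
  have hα : 367 ≤ alpha (strongPower (circularGraph 2 7) 5) :=
    card_witness ▸ isIndep_witness.card_le_alpha
  refine ⟨⟨witness, card_witness, isIndep_witness⟩, hα, ?_⟩
  calc (367 : ℝ) ^ ((1 : ℝ) / 5)
      ≤ (alpha (strongPower (circularGraph 2 7) (5 : ℕ+)) : ℝ) ^
          ((1 : ℝ) / ((5 : ℕ+) : ℝ)) := by
        norm_num only [PNat.val_ofNat]; gcongr; exact_mod_cast hα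
    _ ≤ shannonCapacity (circularGraph 2 7) :=
        alpha_strongPower_rpow_le_shannonCapacity _ 5
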